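/- Let d ∈ (−1,1), ω ∈ ℝ, γ > 0 and β ∈ ℂ. If ϱ ∈ M₂(ℂ) satisfies tr ϱ = 1 and L⋆ᵃ(ϱ) = 0, then ϱ = ϱᵃ_∞, where ϱᵃ_∞ is the 2×2 matrix with entries (ϱᵃ_∞)₁₁ = 1/2 + d(γ² + ω²)/(2(γ² + ω² + 2|β|²)), (ϱᵃ_∞)₁₂ = dβ(γ − iω)/(γ² + ω² + 2|β|²), (ϱᵃ_∞)₂₁ = d·conj(β)(γ + iω)/(γ² + ω² + 2|β|²), (ϱᵃ_∞)₂₂ = 1/2 − d(γ² + ω²)/(2(γ² + ω² + 2|β|²)). That is, ϱᵃ_∞ is the unique trace-one fixed point of L⋆ᵃ. -/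

import Mathlib

open Matrix ComplexOrder

/-- `σ⁺ = [[0,1],[0,0]]`. -/
noncomputable def sigmaPlus : Matrix (Fin 2) (Fin 2) ℂ := !![0, 1; 0, 0]

/-- `σ⁻ = [[0,0],[1,0]]`. -/
noncomputable def sigmaMinus : Matrix (Fin 2) (Fin 2) ℂ := !![0, 0; 1, 0]

/-- `σ³ = [[1,0],[0,−1]]`. -/
noncomputable def sigma3 : Matrix (Fin 2) (Fin 2) ℂ := !![1, 0; 0, -1]

/-- The atomic GKSL generator `L⋆ᵃ` on `M₂(ℂ)` with parameters `d, ω, γ, β`. -/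
noncomputable def Lstara (d ω γ : ℝ) (β : ℂ) (ϱ : Matrix (Fin 2) (Fin 2) ℂ) :
    Matrix (Fin 2) (Fin 2) ℂ :=
  (-(Complex.I * (ω : ℂ) / 2)) • (sigma3 * ϱ - ϱ * sigma3)
  + ((γ * (1 - d) : ℝ) : ℂ) •
      (sigmaMinus * ϱ * sigmaPlus - (1 / 2 : ℂ) • (sigmaPlus * sigmaMinus * ϱ)
        - (1 / 2 : ℂ) • (ϱ * (sigmaPlus * sigmaMinus)))
  + ((γ * (1 + d) : ℝ) : ℂ) •
      (sigmaPlus * ϱ * sigmaMinus - (1 / 2 : ℂ) • (sigmaMinus * sigmaPlus * ϱ)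
        - (1 / 2 : ℂ) • (ϱ * (sigmaMinus * sigmaPlus)))
  + (((starRingEnd ℂ) β • sigmaMinus - β • sigmaPlus) * ϱ
      - ϱ * ((starRingEnd ℂ) β • sigmaMinus - β • sigmaPlus))

/-- The equilibrium state `ϱᵃ_∞` of the atomic GKSL generator. -/
noncomputable def rhoAInf (d ω γ : ℝ) (β : ℂ) : Matrix (Fin 2) (Fin 2) ℂ :=
  !![((1 / 2 + d * (γ ^ 2 + ω ^ 2) /
        (2 * (γ ^ 2 + ω ^ 2 + 2 * ‖β‖ ^ 2)) : ℝ) : ℂ),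
     (d : ℂ) * β * ((γ : ℂ) - (ω : ℂ) * Complex.I) /
        (((γ ^ 2 + ω ^ 2 + 2 * ‖β‖ ^ 2 : ℝ)) : ℂ);
     (d : ℂ) * (starRingEnd ℂ) β * ((γ : ℂ) + (ω : ℂ) * Complex.I) /
        (((γ ^ 2 + ω ^ 2 + 2 * ‖β‖ ^ 2 : ℝ)) : ℂ),
     ((1 / 2 - d * (γ ^ 2 + ω ^ 2) /
        (2 * (γ ^ 2 + ω ^ 2 + 2 * ‖β‖ ^ 2)) : ℝ) : ℂ)]


/-! With `s = ϱ₀₀ - ϱ₁₁`, the off-diagonal entries of `L⋆ᵃ ϱ = 0` read `(γ + iω) ϱ₀₁ = β s` and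
`(γ - iω) ϱ₁₀ = β̄ s`. Multiplying the diagonal entry by `γ² + ω² = (γ + iω)(γ - iω)` and
substituting them turns the coupling terms into `2γ‖β‖² s`, leaving
`γ (s (γ² + ω² + 2‖β‖²) - d (γ² + ω²)) = 0`. As `γ ≠ 0` this fixes `s`, hence the off-diagonal
entries, and `tr ϱ = 1` then fixes the diagonal. -/

open Complex ComplexConjugate

section LstaraEntries

variable (d ω γ : ℝ) (β : ℂ) (ϱ : Matrix (Fin 2) (Fin 2) ℂ)

theorem Lstara_apply_zero_zero :
    Lstara d ω γ β ϱ 0 0 =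
      γ * d * ϱ.trace - γ * (ϱ 0 0 - ϱ 1 1) - β * ϱ 1 0 - conj β * ϱ 0 1 := by
  simp only [Lstara, sigmaPlus, sigmaMinus, sigma3, Matrix.add_apply, Matrix.sub_apply,
    Matrix.smul_apply, mul_apply, Fin.sum_univ_two, of_apply, cons_val', cons_val_zero,
    cons_val_one, cons_val_fin_one, smul_eq_mul, trace_fin_two]
  push_cast
  ring

theorem Lstara_apply_zero_one :
    Lstara d ω γ β ϱ 0 1 = β * (ϱ 0 0 - ϱ 1 1) - (γ + ω * I) * ϱ 0 1 := by
  simp only [Lstara, sigmaPlus, sigmaMinus, sigma3, Matrix.add_apply, Matrix.sub_apply,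
    Matrix.smul_apply, mul_apply, Fin.sum_univ_two, of_apply, cons_val', cons_val_zero,
    cons_val_one, cons_val_fin_one, smul_eq_mul]
  push_cast
  ring

theorem Lstara_apply_one_zero :
    Lstara d ω γ β ϱ 1 0 = conj β * (ϱ 0 0 - ϱ 1 1) - (γ - ω * I) * ϱ 1 0 := by
  simp only [Lstara, sigmaPlus, sigmaMinus, sigma3, Matrix.add_apply, Matrix.sub_apply,
    Matrix.smul_apply, mul_apply, Fin.sum_univ_two, of_apply, cons_val', cons_val_zero,
    cons_val_one, cons_val_fin_one, smul_eq_mul]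
  push_cast
  ring

end LstaraEntries

theorem solve_atomic_fixed_point_equations {d ω γ : ℝ} {β s b c : ℂ} (hγ : γ ≠ 0)
    (h00 : γ * d - γ * s - β * c - conj β * b = 0)
    (h01 : β * s - (γ + ω * I) * b = 0)
    (h10 : conj β * s - (γ - ω * I) * c = 0) :
    s * (γ ^ 2 + ω ^ 2 + 2 * ‖β‖ ^ 2) = d * (γ ^ 2 + ω ^ 2) ∧
      b * (γ ^ 2 + ω ^ 2 + 2 * ‖β‖ ^ 2) = d * β * (γ - ω * I) ∧
      c * (γ ^ 2 + ω ^ 2 + 2 * ‖β‖ ^ 2) = d * conj β * (γ + ω * I) := by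
  have hs : s * (γ ^ 2 + ω ^ 2 + 2 * ‖β‖ ^ 2) = d * (γ ^ 2 + ω ^ 2) := by
    refine sub_eq_zero.mp ((mul_eq_zero.mp ?_).resolve_left (ofReal_ne_zero.mpr hγ))
    linear_combination -(γ ^ 2 + ω ^ 2 : ℂ) * h00 + β * (γ + ω * I) * h10
      + conj β * (γ - ω * I) * h01 - 2 * γ * s * mul_conj' β
      - (β * ω ^ 2 * c + conj β * ω ^ 2 * b) * I_sq
  refine ⟨hs, mul_left_cancel₀ (a := γ + ω * I) (ne_of_apply_ne re (by simpa using hγ)) ?_,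
    mul_left_cancel₀ (a := γ - ω * I) (ne_of_apply_ne re (by simpa using hγ)) ?_⟩
  · linear_combination -(γ ^ 2 + ω ^ 2 + 2 * ‖β‖ ^ 2 : ℂ) * h01 + β * hs + d * β * ω ^ 2 * I_sq
  · linear_combination -(γ ^ 2 + ω ^ 2 + 2 * ‖β‖ ^ 2 : ℂ) * h10 + conj β * hs
      + d * conj β * ω ^ 2 * I_sq

theorem atomic_gksl_unique_fixed_point
    (d ω γ : ℝ) (β : ℂ) (hγ : 0 < γ)
    (ϱ : Matrix (Fin 2) (Fin 2) ℂ)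
    (htr : ϱ.trace = 1) (hfix : Lstara d ω γ β ϱ = 0) :
    ϱ = rhoAInf d ω γ β := by
  have h00 := Lstara_apply_zero_zero d ω γ β ϱ ▸ congrFun₂ hfix 0 0
  have h01 := Lstara_apply_zero_one d ω γ β ϱ ▸ congrFun₂ hfix 0 1
  have h10 := Lstara_apply_one_zero d ω γ β ϱ ▸ congrFun₂ hfix 1 0
  rw [htr, mul_one] at h00
  obtain ⟨hs, hb, hc⟩ := solve_atomic_fixed_point_equations hγ.ne' h00 h01 h10
  have hD : (γ ^ 2 + ω ^ 2 + 2 * ‖β‖ ^ 2 : ℂ) ≠ 0 := by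
    exact_mod_cast (by positivity : (0 : ℝ) < γ ^ 2 + ω ^ 2 + 2 * ‖β‖ ^ 2).ne'
  rw [trace_fin_two] at htr
  ext i j
  fin_cases i <;> fin_cases j <;>
    simp only [Fin.zero_eta, Fin.mk_one, Fin.isValue, rhoAInf, one_div, ofReal_add, ofReal_inv,
      ofReal_ofNat, ofReal_div, ofReal_mul, ofReal_pow, ofReal_sub, of_apply, cons_val',
      cons_val_zero, cons_val_one, cons_val_fin_one] <;>
    field_simp
  · linear_combination hs + (γ ^ 2 + ω ^ 2 + 2 * ‖β‖ ^ 2 : ℂ) * htr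
  · exact hb
  · exact hc
  · linear_combination -hs + (γ ^ 2 + ω ^ 2 + 2 * ‖β‖ ^ 2 : ℂ) * htr
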